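/- arXiv:2305.03166 — 4 statements merged into one kernel-verified Lean document; each statement's English description precedes it below -/
import Mathlib

section
/- In the excluded-set topology on ℝ determined by the irrationals 𝕀 (where U is open iff U = ℝ or U ∩ 𝕀 = ∅), the set ℚ is open but not C-open. -/
def IsCOpen {X : Type*} [TopologicalSpace X] (A : Set X) : Prop :=
  IsOpen A ∧ (closure A \ A).Countable

theorem rat_open_not_COpen (T : TopologicalSpace ℝ)
    (hT : ∀ U : Set ℝ, @IsOpen ℝ T U ↔ U = Set.univ ∨ U ∩ {x : ℝ | Irrational x} = ∅) :
    @IsOpen ℝ T {x : ℝ | ¬ Irrational x} ∧ ¬ @IsCOpen ℝ T {x : ℝ | ¬ Irrational x} := by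
  letI := T
  set Q : Set ℝ := {x : ℝ | ¬ Irrational x} with hQ
  have hQcount : Q.Countable := by
    have : Q = Set.range ((↑) : ℚ → ℝ) := by
      ext x; simp [Q, Irrational]
    rw [this]; exact Set.countable_range _
  have hopen : IsOpen Q := by
    rw [hT]
    right
    ext x; simp [Q, Set.mem_inter_iff]

  refine ⟨hopen, ?_⟩
  rintro ⟨-, hc⟩
  have hcl : closure Q = Set.univ := by
    by_contra h
    have hclosed : IsClosed (closure Q) := isClosed_closure
    have hU := (hT _).mp hclosed.isOpen_compl
    rcases hU with h1 | h2
    · have : closure Q = ∅ := by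
        rw [← Set.compl_univ, ← h1, compl_compl]
      have h0 : (0:ℝ) ∈ Q := by simp [Q, Rat.not_irrational 0]
      have h2 := subset_closure h0
      rw [this] at h2
      exact h2
    · have hsub : (closure Q)ᶜ ⊆ Q := by
        intro x hx
        by_contra hxQ
        have : x ∈ (closure Q)ᶜ ∩ {x : ℝ | Irrational x} := ⟨hx, by simpa [Q] using hxQ⟩
        rw [h2] at this; exact this
      have hsub2 : (closure Q)ᶜ ⊆ Qᶜ := Set.compl_subset_compl.mpr subset_closure
      have : (closure Q)ᶜ = ∅ := by
        ext x; simp only [Set.mem_empty_iff_false, iff_false]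
        intro hx; exact hsub2 hx (hsub hx)
      apply h
      rw [← compl_compl (closure Q), this, Set.compl_empty]
  rw [hcl] at hc
  have : (Set.univ : Set ℝ).Countable := by
    have := hc.union hQcount
    rwa [Set.diff_union_of_subset (Set.subset_univ Q)] at this
  exact Cardinal.not_countable_real this
end

section
/- For subsets K, H of a topological space, int^C(K ∩ H) = int^C(K) ∩ int^C(H), where int^C denotes the C-interior. -/
def IsCClosed {X : Type*} [TopologicalSpace X] (A : Set X) : Prop :=
  IsClosed A ∧ (A \ interior A).Countable

def cInterior {X : Type*} [TopologicalSpace X] (K : Set X) : Set X :=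
  ⋃₀ {U | IsCOpen U ∧ U ⊆ K}

def cClosure {X : Type*} [TopologicalSpace X] (K : Set X) : Set X :=
  ⋂₀ {F | IsCClosed F ∧ K ⊆ F}

lemma IsCOpen.inter {X : Type*} [TopologicalSpace X] {U V : Set X}
    (hU : IsCOpen U) (hV : IsCOpen V) : IsCOpen (U ∩ V) := by
  refine ⟨hU.1.inter hV.1, ?_⟩
  refine ((hU.2.union hV.2).mono ?_)
  intro x hx
  have h1 : x ∈ closure U := closure_mono Set.inter_subset_left hx.1
  have h2 : x ∈ closure V := closure_mono Set.inter_subset_right hx.1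
  by_cases hxU : x ∈ U
  · exact Or.inr ⟨h2, fun hxV => hx.2 ⟨hxU, hxV⟩⟩
  · exact Or.inl ⟨h1, hxU⟩

theorem cInterior_inter {X : Type*} [TopologicalSpace X] (K H : Set X) :
    cInterior (K ∩ H) = cInterior K ∩ cInterior H := by
  ext x
  constructor
  · rintro ⟨U, ⟨hU, hUKH⟩, hxU⟩
    exact ⟨⟨U, ⟨hU, hUKH.trans Set.inter_subset_left⟩, hxU⟩,
      ⟨U, ⟨hU, hUKH.trans Set.inter_subset_right⟩, hxU⟩⟩
  · rintro ⟨⟨U, ⟨hU, hUK⟩, hxU⟩, ⟨V, ⟨hV, hVH⟩, hxV⟩⟩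
    exact ⟨U ∩ V, ⟨hU.inter hV, Set.inter_subset_inter hUK hVH⟩, hxU, hxV⟩
end

section
/- For subsets K, H of a topological space, cl^C(K ∪ H) = cl^C(K) ∪ cl^C(H), where cl^C denotes the C-closure. -/
lemma IsCClosed.union {X : Type*} [TopologicalSpace X] {F G : Set X}
    (hF : IsCClosed F) (hG : IsCClosed G) : IsCClosed (F ∪ G) := by
  refine ⟨hF.1.union hG.1, Set.Countable.mono ?_ ((hF.2.union hG.2))⟩
  rintro x ⟨hx, hnx⟩
  have hF' : x ∉ interior F := fun h => hnx (interior_mono Set.subset_union_left h)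
  have hG' : x ∉ interior G := fun h => hnx (interior_mono Set.subset_union_right h)
  rcases hx with h | h
  · exact Or.inl ⟨h, hF'⟩
  · exact Or.inr ⟨h, hG'⟩

theorem cClosure_union {X : Type*} [TopologicalSpace X] (K H : Set X) :
    cClosure (K ∪ H) = cClosure K ∪ cClosure H := by
  apply Set.Subset.antisymm
  · intro x hx
    by_contra hc
    rw [Set.mem_union, not_or] at hc
    obtain ⟨hK, hH⟩ := hc
    simp only [cClosure, Set.mem_sInter, Set.mem_setOf_eq, not_forall] at hK hH
    obtain ⟨F, ⟨hFc, hKF⟩, hxF⟩ := hK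
    obtain ⟨G, ⟨hGc, hHG⟩, hxG⟩ := hH
    have := hx (F ∪ G) ⟨hFc.union hGc, Set.union_subset_union hKF hHG⟩
    rcases this with h | h
    · exact hxF h
    · exact hxG h
  · apply Set.union_subset <;>
      exact Set.sInter_subset_sInter fun F hF =>
        ⟨hF.1, (by first
          | exact Set.subset_union_left.trans hF.2
          | exact Set.subset_union_right.trans hF.2)⟩
end

section
/- If h : X → Y is C-continuous, C-open, and onto, and X is C-compact, then Y is C-compact. -/
def CCompact (X : Type*) [TopologicalSpace X] : Prop :=
  ∀ {ι : Type} (U : ι → Set X), (∀ i, IsOpen (U i)) → (⋃ i, U i) = Set.univ →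
    ∃ t : Finset ι, (∀ i ∈ t, IsCOpen (U i)) ∧ (⋃ i ∈ t, U i) = Set.univ

theorem image_CCompact {X Y : Type*} [TopologicalSpace X] [TopologicalSpace Y]
    (h : X → Y)
    (hcont : ∀ U : Set Y, IsOpen U → IsCOpen (h ⁻¹' U))
    (hopen : ∀ U : Set X, IsOpen U → IsCOpen (h '' U))
    (hsurj : Function.Surjective h)
    (hX : CCompact X) : CCompact Y := by
  intro ι U hU hcov
  obtain ⟨t, ht, hcovt⟩ := hX (fun i => h ⁻¹' (U i))
    (fun i => (hcont _ (hU i)).1)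
    (by rw [← Set.preimage_iUnion, hcov, Set.preimage_univ])
  refine ⟨t, fun i hi => ?_, ?_⟩
  · have := hopen _ ((hcont _ (hU i)).1)
    rwa [Set.image_preimage_eq _ hsurj] at this
  · apply Set.eq_univ_of_forall
    intro y
    obtain ⟨x, rfl⟩ := hsurj y
    have hx : x ∈ ⋃ i ∈ t, h ⁻¹' (U i) := hcovt ▸ Set.mem_univ x
    simp only [Set.mem_iUnion] at hx ⊢
    obtain ⟨i, hi, hxi⟩ := hx
    exact ⟨i, hi, hxi⟩
end
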